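/- arXiv:2409.06376 — 3 statements merged into one kernel-verified Lean document; each statement's English description precedes it below -/
import Mathlib

section
/- Let C = ℕ^p, let ⪯ be an admissible total order on ℕ^p, let f = (f_1, …, f_p) ∈ ℕ^p \ {0}, and let g be a positive integer. Then there exists an ℕ^p-semigroup S with Fb(S) = f and g(S) = g if and only if ⌈(∏_{i=1}^p (f_i + 1))/2⌉ ≤ g ≤ N(f). -/
open Set BigOperators

/-- `C` is an integer cone: the intersection with `ℕ^p` of the set of nonnegative
real linear combinations of a finite set `A ⊆ ℕ^p`. -/
def IsIntegerCone (p : ℕ) (C : Set (Fin p → ℕ)) : Prop :=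
  ∃ A : Finset (Fin p → ℕ),
    C = {x : Fin p → ℕ | ∃ l : (Fin p → ℕ) → ℝ,
      (∀ a, 0 ≤ l a) ∧ ∀ i, (x i : ℝ) = ∑ a ∈ A, l a * (a i : ℝ)}

/-- An admissible total order on `ℕ^p`: total, compatible with addition,
with `0` minimum, and with finite down-sets. -/
structure AdmissibleOrder (p : ℕ) where
  le : (Fin p → ℕ) → (Fin p → ℕ) → Prop
  le_refl : ∀ x, le x x
  le_antisymm : ∀ x y, le x y → le y x → x = y
  le_trans : ∀ x y z, le x y → le y z → le x z
  le_total : ∀ x y, le x y ∨ le y x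
  add_right : ∀ x y z, le x y → le (x + z) (y + z)
  zero_le : ∀ x, le 0 x
  finite_le : ∀ f, {x : Fin p → ℕ | le x f}.Finite

/-- Strict version of an admissible order. -/
def AdmissibleOrder.lt {p : ℕ} (O : AdmissibleOrder p) (x y : Fin p → ℕ) : Prop :=
  O.le x y ∧ x ≠ y

/-- `S` is a `C`-semigroup: a submonoid of `ℕ^p` contained in `C` with finite complement in `C`. -/
def IsCSemigroup {p : ℕ} (C S : Set (Fin p → ℕ)) : Prop :=
  S ⊆ C ∧ 0 ∈ S ∧ (∀ x ∈ S, ∀ y ∈ S, x + y ∈ S) ∧ (C \ S).Finite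

/-- `f` is the Frobenius element of `S`: the `⪯`-maximum of `C \ S`. -/
def IsFrob {p : ℕ} (O : AdmissibleOrder p) (C S : Set (Fin p → ℕ)) (f : Fin p → ℕ) : Prop :=
  f ∈ C \ S ∧ ∀ x ∈ C \ S, O.le x f

/-- `B(f) = {x ∈ C : f - x ∈ C}`. -/
def BSet {p : ℕ} (C : Set (Fin p → ℕ)) (f : Fin p → ℕ) : Set (Fin p → ℕ) :=
  {x | x ∈ C ∧ ∃ y ∈ C, x + y = f}

/-- `N(f) = #{x ∈ C \ {0} : x ⪯ f}`. -/
noncomputable def NNum {p : ℕ} (O : AdmissibleOrder p) (C : Set (Fin p → ℕ)) (f : Fin p → ℕ) : ℕ :=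
  {x | x ∈ C ∧ x ≠ 0 ∧ O.le x f}.ncard

/-- The genus of `S`: the number of gaps `#(C \ S)`. -/
noncomputable def genusOf {p : ℕ} (C S : Set (Fin p → ℕ)) : ℕ := (C \ S).ncard

/-- The number of small elements `n(S) = #{s ∈ S : s ≺ Fb(S)}`; an element is smaller than
the Frobenius element iff it is strictly smaller than some gap. -/
noncomputable def smallCount {p : ℕ} (O : AdmissibleOrder p) (C S : Set (Fin p → ℕ)) : ℕ :=
  {s | s ∈ S ∧ ∃ h ∈ C \ S, O.lt s h}.ncard

/-- The minimal generating set of `S`. -/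
def msg {p : ℕ} (S : Set (Fin p → ℕ)) : Set (Fin p → ℕ) :=
  (S \ {0}) \ {x | ∃ a ∈ S \ {0}, ∃ b ∈ S \ {0}, a + b = x}

/-- `S` is a `B`-semigroup with respect to `f`. -/
def IsBSemigroup {p : ℕ} (O : AdmissibleOrder p) (C S : Set (Fin p → ℕ)) (f : Fin p → ℕ) : Prop :=
  IsCSemigroup C S ∧ IsFrob O C S f ∧ C \ BSet C f ⊆ S

/-- `a = α(S)`, the `⪯`-minimum of `(S \ {0}) ∩ B(f)`, with the convention `α(S) = f`
when `S ∩ B(f) = {0}`. -/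
def IsAlpha {p : ℕ} (O : AdmissibleOrder p) (C S : Set (Fin p → ℕ)) (f a : Fin p → ℕ) : Prop :=
  (a ∈ S ∧ a ≠ 0 ∧ a ∈ BSet C f ∧ ∀ x ∈ S, x ≠ 0 → x ∈ BSet C f → O.le a x)
  ∨ ((∀ x ∈ S ∩ BSet C f, x = 0) ∧ a = f)

/-- `x` is a special gap of `T`. -/
def SpecialGap {p : ℕ} (C T : Set (Fin p → ℕ)) (x : Fin p → ℕ) : Prop :=
  x ∈ C \ T ∧ x + x ∈ T ∧ ∀ t ∈ T, t ≠ 0 → x + t ∈ T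

/-- `l = λ(S)`, the `⪯`-largest gap of `S` lying outside `B(f)` (no convention case). -/
def IsLambdaGap {p : ℕ} (O : AdmissibleOrder p) (C S : Set (Fin p → ℕ)) (f l : Fin p → ℕ) : Prop :=
  l ∈ C \ S ∧ l ∉ BSet C f ∧ ∀ x ∈ C \ S, x ∉ BSet C f → O.le x l

/-- `l = λ(S)`, with the convention `λ(S) = 0` when `S` has no gap outside `B(f)`. -/
def IsLambda {p : ℕ} (O : AdmissibleOrder p) (C S : Set (Fin p → ℕ)) (f l : Fin p → ℕ) : Prop :=
  IsLambdaGap O C S f l ∨ ((∀ x ∈ C \ S, x ∈ BSet C f) ∧ l = 0)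

/-- `x ≤_C y` iff `y - x ∈ C`. -/
def leC {p : ℕ} (C : Set (Fin p → ℕ)) (x y : Fin p → ℕ) : Prop := ∃ d ∈ C, x + d = y

/-- The ordinary `C`-semigroup `S_c = {0} ∪ {x ∈ C : c ⪯ x}`. -/
def ordinarySemigroup {p : ℕ} (O : AdmissibleOrder p) (C : Set (Fin p → ℕ))
    (c : Fin p → ℕ) : Set (Fin p → ℕ) :=
  insert 0 {x | x ∈ C ∧ O.le c x}

/-- `S` is an arf semigroup in `C`. -/
def ArfSemigroup {p : ℕ} (C S : Set (Fin p → ℕ)) : Prop :=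
  ∀ x ∈ S, ∀ y ∈ S, ∀ z ∈ S, leC C z y → leC C y x →
    ∀ w : Fin p → ℕ, w + z = x + y → w ∈ S

/-- `S` is a saturated semigroup in `C`: whenever `s, s₁, …, s_r ∈ S` with `s_i ≤_C s`,
and `z : Fin r → ℤ` with `z₁s₁ + ⋯ + z_rs_r ∈ C` (as an element `t` of `ℕ^p`),
then `s + z₁s₁ + ⋯ + z_rs_r = s + t ∈ S`. -/
def SaturatedSemigroup {p : ℕ} (C S : Set (Fin p → ℕ)) : Prop :=
  ∀ (r : ℕ) (s : Fin p → ℕ) (si : Fin r → (Fin p → ℕ)) (z : Fin r → ℤ),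
    s ∈ S → (∀ i, si i ∈ S) → (∀ i, leC C (si i) s) →
    ∀ t ∈ C, (∀ j, (t j : ℤ) = ∑ i, z i * (si i j : ℤ)) → s + t ∈ S


section Aux

variable {p : ℕ}

lemma ao_le_add (O : AdmissibleOrder p) (x y : Fin p → ℕ) : O.le x (x + y) := by
  have h := O.add_right 0 y x (O.zero_le y)
  simpa [add_comm] using h

lemma ao_not_lt (O : AdmissibleOrder p) {x y : Fin p → ℕ} :
    ¬ O.lt x y ↔ O.le y x := by
  constructor
  · intro h
    rcases O.le_total x y with h1 | h1
    · by_cases hxy : x = y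
      · subst hxy; exact O.le_refl x
      · exact absurd ⟨h1, hxy⟩ h
    · exact h1
  · rintro h ⟨h1, h2⟩
    exact h2 (O.le_antisymm x y h1 h)

lemma ao_pointwise (O : AdmissibleOrder p) {u v : Fin p → ℕ} (h : ∀ i, u i ≤ v i) :
    O.le u v := by
  have hv : v = u + (v - u) := by
    funext i
    have := h i
    simp [Pi.add_apply, Pi.sub_apply]
    omega
  rw [hv]
  exact ao_le_add O u (v - u)

lemma ao_exists_max (O : AdmissibleOrder p) (s : Finset (Fin p → ℕ)) (hs : s.Nonempty) :
    ∃ m ∈ s, ∀ x ∈ s, O.le x m := by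
  classical
  induction s using Finset.induction_on with
  | empty => exact absurd hs (by simp)
  | @insert a s _ ih =>
    rcases s.eq_empty_or_nonempty with rfl | hne
    · exact ⟨a, by simp, by simp [O.le_refl]⟩
    · obtain ⟨m, hm, hmax⟩ := ih hne
      rcases O.le_total a m with h | h
      · exact ⟨m, Finset.mem_insert_of_mem hm, fun x hx => by
          rcases Finset.mem_insert.1 hx with rfl | hx
          · exact h
          · exact hmax x hx⟩
      · exact ⟨a, Finset.mem_insert_self a s, fun x hx => by
          rcases Finset.mem_insert.1 hx with rfl | hx
          · exact O.le_refl x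
          · exact O.le_trans x m a (hmax x hx) h⟩

lemma ao_topk (O : AdmissibleOrder p) (E : Finset (Fin p → ℕ)) :
    ∀ k ≤ E.card, ∃ T, T ⊆ E ∧ T.card = k ∧
      ∀ a ∈ T, ∀ b ∈ E, O.le a b → b ∈ T := by
  classical
  intro k
  induction k with
  | zero => exact fun _ => ⟨∅, by simp⟩
  | succ k ih =>
    intro hk
    obtain ⟨T, hTE, hTc, hTu⟩ := ih (by omega)
    have hne : (E \ T).Nonempty := by
      rw [← Finset.card_pos, Finset.card_sdiff_of_subset hTE]
      omega
    obtain ⟨m, hm, hmax⟩ := ao_exists_max O _ hne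
    have hmE : m ∈ E := (Finset.mem_sdiff.1 hm).1
    have hmT : m ∉ T := (Finset.mem_sdiff.1 hm).2
    refine ⟨insert m T, Finset.insert_subset hmE hTE, ?_, ?_⟩
    · rw [Finset.card_insert_of_notMem hmT]; omega
    · intro a ha b hb hab
      rcases Finset.mem_insert.1 ha with rfl | haT
      · by_cases hbT : b ∈ T
        · exact Finset.mem_insert_of_mem hbT
        · have hbm : b = a :=
            O.le_antisymm b a (hmax b (Finset.mem_sdiff.2 ⟨hb, hbT⟩)) hab
          rw [hbm]; exact Finset.mem_insert_self a T
      · exact Finset.mem_insert_of_mem (hTu a haT b hb hab)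

end Aux

/-- For C = ℕ^p: there exists an ℕ^p-semigroup with Frobenius element f and genus g iff
⌈(∏ (f_i + 1))/2⌉ ≤ g ≤ N(f). -/


theorem statement1 (p : ℕ) (hp : 0 < p) (O : AdmissibleOrder p)
    (f : Fin p → ℕ) (hf0 : f ≠ 0) (g : ℕ) (hg : 0 < g) :
    (∃ S : Set (Fin p → ℕ), IsCSemigroup Set.univ S ∧ IsFrob O Set.univ S f ∧
        genusOf Set.univ S = g) ↔
      (((∏ i, (f i + 1)) + 1) / 2 ≤ g ∧ g ≤ NNum O Set.univ f) := by
  classical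
  set n := ∏ i, (f i + 1) with hn
  set Bf : Finset (Fin p → ℕ) := Fintype.piFinset fun i => Finset.range (f i + 1) with hBf
  have hmemB : ∀ x, x ∈ Bf ↔ ∀ i, x i ≤ f i := by
    intro x; simp [hBf, Fintype.mem_piFinset, Nat.lt_succ_iff]
  have hBcard : Bf.card = n := by
    simp [hBf, Fintype.card_piFinset, hn]
  have hfB : f ∈ Bf := (hmemB f).2 fun i => le_refl _
  have h0B : (0 : Fin p → ℕ) ∈ Bf := (hmemB 0).2 fun i => Nat.zero_le _
  set Wf : Finset (Fin p → ℕ) := (O.finite_le f).toFinset.filter (fun x => x ≠ 0) with hWf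
  have hmemW : ∀ x, x ∈ Wf ↔ x ≠ 0 ∧ O.le x f := by
    intro x
    simp only [hWf, Finset.mem_filter, Set.Finite.mem_toFinset, Set.mem_setOf_eq]
    tauto
  have hN : NNum O Set.univ f = Wf.card := by
    have hset : {x : Fin p → ℕ | x ∈ Set.univ ∧ x ≠ 0 ∧ O.le x f} = ↑Wf := by
      ext x; simp [hmemW]
    rw [NNum, hset, Set.ncard_coe_finset]
  have hsub_mem : ∀ x : Fin p → ℕ, f - x ∈ Bf := by
    intro x
    refine (hmemB _).2 fun i => ?_
    simp [Pi.sub_apply]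
  have hsub2 : ∀ x ∈ Bf, f - (f - x) = x := by
    intro x hx
    funext i
    have := (hmemB x).1 hx i
    simp [Pi.sub_apply]
    omega
  constructor
  · rintro ⟨S, ⟨-, h0S, hadd, hfin⟩, ⟨hfCS, hmax⟩, hgen⟩
    have hfS : f ∉ S := hfCS.2
    have hupper : g ≤ NNum O Set.univ f := by
      rw [← hgen, hN, genusOf, ← Set.ncard_coe_finset]
      apply Set.ncard_le_ncard _ Wf.finite_toSet
      intro x hx
      rcases hx with ⟨-, hxS⟩
      rw [Finset.mem_coe, hmemW]
      exact ⟨fun h => hxS (h ▸ h0S), hmax x ⟨trivial, hxS⟩⟩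
    have key : ∀ x ∈ Bf, x ∈ S → f - x ∉ S := by
      intro x hx hxS hfxS
      apply hfS
      have hxf : x + (f - x) = f := by
        funext i
        have := (hmemB x).1 hx i
        simp [Pi.add_apply, Pi.sub_apply]
        omega
      rw [← hxf]
      exact hadd x hxS _ hfxS
    have hsplit : (Bf.filter (fun x => x ∈ S)).card
        + (Bf.filter (fun x => x ∉ S)).card = Bf.card :=
      Finset.card_filter_add_card_filter_not (fun x => x ∈ S)
    have hinj : (Bf.filter (fun x => x ∈ S)).card ≤ (Bf.filter (fun x => x ∉ S)).card := by
      apply Finset.card_le_card_of_injOn (fun x => f - x)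
      · intro x hx
        simp only [Finset.coe_filter, Set.mem_setOf_eq] at hx ⊢
        exact ⟨hsub_mem x, key x hx.1 hx.2⟩
      · intro x hx y hy hxy
        simp only [Finset.coe_filter, Set.mem_setOf_eq] at hx hy
        have h1 := hsub2 x hx.1
        have h2 := hsub2 y hy.1
        rw [← h1, ← h2]
        exact congrArg (fun z => f - z) hxy
    have hgap : (Bf.filter (fun x => x ∉ S)).card ≤ g := by
      rw [← hgen, genusOf, ← Set.ncard_coe_finset]
      apply Set.ncard_le_ncard _ hfin
      intro x hx
      rw [Finset.mem_coe, Finset.mem_filter] at hx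
      exact ⟨trivial, hx.2⟩
    constructor
    · omega
    · exact hupper
  · rintro ⟨hlow, hhigh⟩
    rw [hN] at hhigh
    -- counting pairs in Bf
    have hsplit1 : (Bf.filter (fun x => O.lt (f - x) x)).card
        + (Bf.filter (fun x => ¬ O.lt (f - x) x)).card = Bf.card :=
      Finset.card_filter_add_card_filter_not (fun x => O.lt (f - x) x)
    have heq1 : Bf.filter (fun x => ¬ O.lt (f - x) x)
        = (Bf.filter (fun x => O.lt x (f - x))) ∪ (Bf.filter fun x => f - x = x) := by
      ext x
      simp only [Finset.mem_filter, Finset.mem_union]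
      constructor
      · rintro ⟨hx, hnp⟩
        have hle : O.le x (f - x) := (ao_not_lt O).1 hnp
        by_cases hfx : f - x = x
        · exact Or.inr ⟨hx, hfx⟩
        · exact Or.inl ⟨hx, hle, fun h => hfx h.symm⟩
      · rintro (⟨hx, hle, hne⟩ | ⟨hx, hfx⟩)
        · refine ⟨hx, ?_⟩
          rintro ⟨h1, h2⟩
          exact h2 (O.le_antisymm _ _ h1 hle)
        · exact ⟨hx, fun hlt => hlt.2 hfx⟩
    have hdisj : Disjoint (Bf.filter (fun x => O.lt x (f - x))) (Bf.filter fun x => f - x = x) := by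
      rw [Finset.disjoint_left]
      intro x hx1 hx2
      rw [Finset.mem_filter] at hx1 hx2
      exact hx1.2.2 hx2.2.symm
    have hbij : (Bf.filter (fun x => O.lt x (f - x))).card
        = (Bf.filter (fun x => O.lt (f - x) x)).card := by
      apply Finset.card_bij' (fun x _ => f - x) (fun x _ => f - x)
      · intro x hx
        rw [Finset.mem_filter] at hx ⊢
        refine ⟨hsub_mem x, ?_⟩
        rw [hsub2 x hx.1]
        exact hx.2
      · intro x hx
        rw [Finset.mem_filter] at hx ⊢
        refine ⟨hsub_mem x, ?_⟩
        rw [hsub2 x hx.1]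
        exact hx.2
      · intro x hx
        exact hsub2 x (Finset.mem_filter.1 hx).1
      · intro x hx
        exact hsub2 x (Finset.mem_filter.1 hx).1
    have hs1 : (Bf.filter fun x => f - x = x).card ≤ 1 := by
      refine Finset.card_le_one.2 fun x hx y hy => ?_
      rw [Finset.mem_filter] at hx hy
      funext i
      have h1 := congrFun hx.2 i
      have h2 := congrFun hy.2 i
      have h3 := (hmemB x).1 hx.1 i
      have h4 := (hmemB y).1 hy.1 i
      simp only [Pi.sub_apply] at h1 h2
      omega
    have hcardU : ((Bf.filter (fun x => O.lt x (f - x))) ∪ (Bf.filter fun x => f - x = x)).card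
        = (Bf.filter (fun x => O.lt x (f - x))).card + (Bf.filter fun x => f - x = x).card :=
      Finset.card_union_of_disjoint hdisj
    have hsplit2 : (Bf.filter (fun x => ¬ O.lt (f - x) x)).card
        = (Bf.filter (fun x => O.lt x (f - x))).card + (Bf.filter fun x => f - x = x).card := by
      rw [heq1]; exact hcardU
    -- parts of E
    set part1 := Wf.filter (fun x => x ∉ Bf) with hpart1
    set part2 := Bf.filter (fun x => x ≠ f ∧ O.lt (f - x) x) with hpart2
    have hpart2W : part2 ⊆ Wf := by
      intro x hx
      rw [hpart2, Finset.mem_filter] at hx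
      refine (hmemW x).2 ⟨?_, ao_pointwise O ((hmemB x).1 hx.1)⟩
      rintro rfl
      have h1 : f - (0 : Fin p → ℕ) = f := by funext i; simp
      rw [h1] at hx
      exact hf0 (O.le_antisymm f 0 hx.2.2.1 (O.zero_le f))
    have hfP : f ∈ Bf.filter (fun x => O.lt (f - x) x) := by
      rw [Finset.mem_filter]
      have h1 : f - f = (0 : Fin p → ℕ) := by funext i; simp
      rw [h1]
      exact ⟨hfB, O.zero_le f, Ne.symm hf0⟩
    have hpart2eq : part2 = (Bf.filter (fun x => O.lt (f - x) x)).erase f := by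
      ext x
      rw [hpart2, Finset.mem_erase, Finset.mem_filter, Finset.mem_filter]
      tauto
    have hcard2 : part2.card = (Bf.filter (fun x => O.lt (f - x) x)).card - 1 := by
      rw [hpart2eq, Finset.card_erase_of_mem hfP]
    have ha1 : 1 ≤ (Bf.filter (fun x => O.lt (f - x) x)).card :=
      Finset.card_pos.2 ⟨f, hfP⟩
    have hWB : Wf.filter (fun x => x ∈ Bf) = Bf.erase 0 := by
      ext x
      rw [Finset.mem_filter, Finset.mem_erase, hmemW]
      constructor
      · rintro ⟨⟨h1, h2⟩, h3⟩; exact ⟨h1, h3⟩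
      · rintro ⟨h1, h2⟩
        exact ⟨⟨h1, ao_pointwise O ((hmemB x).1 h2)⟩, h2⟩
    have hsplitW : (Wf.filter (fun x => x ∈ Bf)).card + part1.card = Wf.card := by
      rw [hpart1]
      exact Finset.card_filter_add_card_filter_not (fun x => x ∈ Bf)
    have hWBcard : (Wf.filter (fun x => x ∈ Bf)).card = Bf.card - 1 := by
      rw [hWB, Finset.card_erase_of_mem h0B]
    have hB1 : 1 ≤ Bf.card := Finset.card_pos.2 ⟨0, h0B⟩
    set E := part1 ∪ part2 with hE
    have hdisjE : Disjoint part1 part2 := by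
      rw [Finset.disjoint_left]
      intro x hx1 hx2
      rw [hpart1, Finset.mem_filter] at hx1
      rw [hpart2, Finset.mem_filter] at hx2
      exact hx1.2 hx2.1
    have hEcard : E.card = part1.card + part2.card := Finset.card_union_of_disjoint hdisjE
    have hEW : E ⊆ Wf := Finset.union_subset (Finset.filter_subset _ _) hpart2W
    have hkE : Wf.card - g ≤ E.card := by omega
    obtain ⟨T, hTE, hTcard, hTup⟩ := ao_topk O E (Wf.card - g) hkE
    have hTW : T ⊆ Wf := hTE.trans hEW
    set S : Set (Fin p → ℕ) := insert 0 ({x | O.lt f x} ∪ ↑T) with hSdef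
    have hmemS : ∀ x, x ∈ S ↔ x = 0 ∨ O.lt f x ∨ x ∈ T := by
      intro x
      simp only [hSdef, Set.mem_insert_iff, Set.mem_union, Set.mem_setOf_eq, Finset.mem_coe]
    have hfT : f ∉ T := by
      intro h
      rcases Finset.mem_union.1 (hTE h) with h1 | h2
      · exact (Finset.mem_filter.1 h1).2 hfB
      · exact (Finset.mem_filter.1 h2).2.1 rfl
    have hfS : f ∉ S := by
      rw [hmemS]
      push_neg
      exact ⟨hf0, fun h => h.2 rfl, hfT⟩
    have hcomp : Set.univ \ S = ↑(Wf \ T) := by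
      ext x
      simp only [Set.mem_diff, Set.mem_univ, true_and, Finset.coe_sdiff, Finset.mem_coe,
        Finset.mem_sdiff]
      rw [hmemS]
      push_neg
      constructor
      · rintro ⟨h0, hlt, hT⟩
        exact ⟨(hmemW x).2 ⟨h0, (ao_not_lt O).1 hlt⟩, hT⟩
      · rintro ⟨hW, hT⟩
        obtain ⟨h0, hle⟩ := (hmemW x).1 hW
        refine ⟨h0, ?_, hT⟩
        rintro ⟨h1, h2⟩
        exact h2 (O.le_antisymm f x h1 hle)
    refine ⟨S, ⟨Set.subset_univ S, Set.mem_insert 0 _, ?_, ?_⟩, ⟨⟨trivial, hfS⟩, ?_⟩, ?_⟩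
    · -- closure under addition
      intro x hx y hy
      rw [hmemS] at hx hy ⊢
      rcases hx with rfl | hx
      · rw [zero_add]; exact hy
      rcases hy with rfl | hy
      · rw [add_zero]; exact Or.inr hx
      by_cases hlt : O.lt f (x + y)
      · exact Or.inr (Or.inl hlt)
      have hlexy : O.le (x + y) f := (ao_not_lt O).1 hlt
      have hxT : x ∈ T := by
        rcases hx with hx | hx
        · exact absurd (O.le_antisymm f x hx.1
            (O.le_trans _ _ _ (ao_le_add O x y) hlexy)) hx.2
        · exact hx
      have hyT : y ∈ T := by
        rcases hy with hy | hy
        · refine absurd (O.le_antisymm f y hy.1 ?_) hy.2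
          have h2 : O.le y (x + y) := by rw [add_comm]; exact ao_le_add O y x
          exact O.le_trans _ _ _ h2 hlexy
        · exact hy
      have hx0 : x ≠ 0 := ((hmemW x).1 (hTW hxT)).1
      have hy0 : y ≠ 0 := ((hmemW y).1 (hTW hyT)).1
      have hxy0 : x + y ≠ 0 := by
        intro h
        apply hx0
        funext i
        have := congrFun h i
        simp only [Pi.add_apply, Pi.zero_apply] at this ⊢
        omega
      have hxyW : x + y ∈ Wf := (hmemW _).2 ⟨hxy0, hlexy⟩
      have hxyE : x + y ∈ E := by
        by_cases hB : x + y ∈ Bf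
        · have hxB : x ∈ Bf := (hmemB x).2 fun i => by
            have := (hmemB _).1 hB i
            simp only [Pi.add_apply] at this
            omega
          have hyB : y ∈ Bf := (hmemB y).2 fun i => by
            have := (hmemB _).1 hB i
            simp only [Pi.add_apply] at this
            omega
          have hxP : x ≠ f ∧ O.lt (f - x) x := by
            rcases Finset.mem_union.1 (hTE hxT) with h1 | h2
            · exact absurd hxB (Finset.mem_filter.1 h1).2
            · exact (Finset.mem_filter.1 h2).2
          have hyP : y ≠ f ∧ O.lt (f - y) y := by
            rcases Finset.mem_union.1 (hTE hyT) with h1 | h2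
            · exact absurd hyB (Finset.mem_filter.1 h1).2
            · exact (Finset.mem_filter.1 h2).2
          refine Finset.mem_union_right _ (Finset.mem_filter.2 ⟨hB, ?_, ?_⟩)
          · intro hxyf
            have hyfx : y = f - x := by
              funext i
              have h1 := congrFun hxyf i
              simp only [Pi.add_apply] at h1
              simp only [Pi.sub_apply]
              omega
            have hxfy : x = f - y := by
              funext i
              have h1 := congrFun hxyf i
              simp only [Pi.add_apply] at h1
              simp only [Pi.sub_apply]
              omega
            have h1 : O.lt y x := by rw [hyfx]; exact hxP.2
            have h2 : O.lt x y := by rw [hxfy]; exact hyP.2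
            exact h1.2 (O.le_antisymm y x h1.1 h2.1)
          · have hle1 : O.le (f - (x + y)) (f - x) := ao_pointwise O fun i => by
              simp only [Pi.sub_apply, Pi.add_apply]
              omega
            have hle2 : O.le (f - x) x := hxP.2.1
            have hle3 : O.le x (x + y) := ao_le_add O x y
            refine ⟨O.le_trans _ _ _ (O.le_trans _ _ _ hle1 hle2) hle3, ?_⟩
            intro heq
            have h4 : O.le (x + y) (f - x) := by rw [heq] at hle1; exact hle1
            have h5 : O.le (x + y) x := O.le_trans _ _ _ h4 hle2
            have h6 := O.le_antisymm _ _ hle3 h5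
            apply hy0
            funext i
            have := congrFun h6 i
            simp only [Pi.add_apply, Pi.zero_apply] at this ⊢
            omega
        · exact Finset.mem_union_left _ (Finset.mem_filter.2 ⟨hxyW, hB⟩)
      exact Or.inr (Or.inr (hTup x hxT _ hxyE (ao_le_add O x y)))
    · -- finite complement
      rw [hcomp]
      exact (Wf \ T).finite_toSet
    · -- Frobenius maximality
      intro x hx
      have hxW : x ∈ Wf \ T := by
        have : x ∈ (↑(Wf \ T) : Set (Fin p → ℕ)) := hcomp ▸ hx
        exact Finset.mem_coe.1 this
      exact ((hmemW x).1 (Finset.mem_sdiff.1 hxW).1).2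
    · -- genus
      rw [genusOf, hcomp, Set.ncard_coe_finset, Finset.card_sdiff_of_subset hTW, hTcard]
      omega
end

section
/- Let C ⊆ ℕ^p be an integer cone, ⪯ an admissible total order on ℕ^p, f ∈ C \ {0}, let T be a B-semigroup with respect to f, and let x ∈ B(f) \ T. Then T ∪ {x} is a B-semigroup with respect to f satisfying (T ∪ {x}) \ {α(T ∪ {x})} = T if and only if x ∈ SG(T) and x ≺ α(T). -/
open Set BigOperators

/-
Adjoining a gap `x` to `T` keeps the monoid closed exactly when `x` is a special gap, and it keeps
the Frobenius element `f` as long as `x ≠ f`. The condition `(T ∪ {x}) \ {α(T ∪ {x})} = T` says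
that `x` itself is `α(T ∪ {x})`, i.e. that `x` lies `⪯`-below every nonzero element of `T ∩ B(f)`,
which is `x ≺ α(T)`. The minimum `α(T)` always exists because `B(f)` is finite.
-/

namespace AdmissibleOrder

variable {p : ℕ} (O : AdmissibleOrder p)

lemma exists_min_of_finite {s : Set (Fin p → ℕ)} (hs : s.Finite) (hne : s.Nonempty) :
    ∃ a ∈ s, ∀ b ∈ s, O.le a b := by
  induction s, hs using Set.Finite.induction_on with
  | empty => exact absurd hne Set.not_nonempty_empty
  | @insert c t _ _ ih =>
    rcases t.eq_empty_or_nonempty with rfl | ht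
    · refine ⟨c, mem_insert c ∅, ?_⟩
      rintro b (rfl | hb)
      exacts [O.le_refl b, absurd hb (notMem_empty b)]
    obtain ⟨a, ha, hmin⟩ := ih ht
    rcases O.le_total c a with hca | hac
    · refine ⟨c, mem_insert c t, ?_⟩
      rintro b (rfl | hb)
      exacts [O.le_refl b, O.le_trans _ _ _ hca (hmin b hb)]
    · refine ⟨a, mem_insert_of_mem c ha, ?_⟩
      rintro b (rfl | hb)
      exacts [hac, hmin b hb]

lemma le_of_mem_BSet {C : Set (Fin p → ℕ)} {f z : Fin p → ℕ} (hz : z ∈ BSet C f) :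
    O.le z f := by
  obtain ⟨_, y, _, rfl⟩ := hz
  simpa [add_comm] using O.add_right 0 y z (O.zero_le y)

end AdmissibleOrder

lemma finite_BSet {p : ℕ} (C : Set (Fin p → ℕ)) (f : Fin p → ℕ) : (BSet C f).Finite :=
  (finite_Iic f).subset fun _ ⟨_, _, _, hzy⟩ => hzy ▸ mem_Iic.mpr le_self_add

lemma exists_isAlpha {p : ℕ} (O : AdmissibleOrder p) (C S : Set (Fin p → ℕ)) (f : Fin p → ℕ) :
    ∃ a, IsAlpha O C S f a := by
  set s := {z | z ∈ S ∧ z ≠ 0 ∧ z ∈ BSet C f}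
  rcases s.eq_empty_or_nonempty with hs | hs
  · exact ⟨f, Or.inr ⟨fun z ⟨hzS, hzB⟩ => by_contra fun hz0 =>
      hs.subset ⟨hzS, hz0, hzB⟩, rfl⟩⟩
  obtain ⟨a, ⟨haS, ha0, haB⟩, hmin⟩ :=
    O.exists_min_of_finite ((finite_BSet C f).subset fun _ hz => hz.2.2) hs
  exact ⟨a, Or.inl ⟨haS, ha0, haB, fun z hzS hz0 hzB => hmin z ⟨hzS, hz0, hzB⟩⟩⟩

section Alpha

variable {p : ℕ} {O : AdmissibleOrder p} {C S : Set (Fin p → ℕ)} {f a : Fin p → ℕ}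

lemma IsAlpha.le_frob (ha : IsAlpha O C S f a) : O.le a f := by
  rcases ha with ⟨-, -, haB, -⟩ | ⟨-, rfl⟩
  exacts [O.le_of_mem_BSet haB, O.le_refl a]

lemma IsAlpha.le_of_mem (ha : IsAlpha O C S f a) {z : Fin p → ℕ} (hzS : z ∈ S) (hz0 : z ≠ 0)
    (hzB : z ∈ BSet C f) : O.le a z := by
  rcases ha with ⟨-, -, -, hmin⟩ | ⟨hS, -⟩
  exacts [hmin z hzS hz0 hzB, absurd (hS z ⟨hzS, hzB⟩) hz0]

lemma IsAlpha.insert_of_lt {T : Set (Fin p → ℕ)} {x : Fin p → ℕ} (ha : IsAlpha O C T f a)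
    (hx : x ∈ BSet C f) (hx0 : x ≠ 0) (hxa : O.lt x a) : IsAlpha O C (insert x T) f x := by
  refine Or.inl ⟨mem_insert x T, hx0, hx, ?_⟩
  rintro z (rfl | hzT) hz0 hzB
  exacts [O.le_refl z, O.le_trans _ _ _ hxa.1 (ha.le_of_mem hzT hz0 hzB)]

lemma IsAlpha.lt_of_insert {T : Set (Fin p → ℕ)} {x : Fin p → ℕ}
    (hx : IsAlpha O C (insert x T) f x) (hxT : x ∉ T) (hxf : x ≠ f) (ha : IsAlpha O C T f a) :
    O.lt x a := by
  have hxB : x ∈ BSet C f := by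
    rcases hx with ⟨-, -, hxB, -⟩ | ⟨-, rfl⟩
    exacts [hxB, absurd rfl hxf]
  rcases ha with ⟨haT, ha0, haB, -⟩ | ⟨-, rfl⟩
  · exact ⟨hx.le_of_mem (mem_insert_of_mem x haT) ha0 haB, fun h => hxT (h ▸ haT)⟩
  · exact ⟨O.le_of_mem_BSet hxB, hxf⟩

end Alpha

section Insert

variable {p : ℕ} {O : AdmissibleOrder p} {C T : Set (Fin p → ℕ)} {f x : Fin p → ℕ}

lemma IsCSemigroup.insert_of_specialGap (hT : IsCSemigroup C T) (hx : SpecialGap C T x) :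
    IsCSemigroup C (insert x T) := by
  obtain ⟨hTC, hT0, hTadd, hTfin⟩ := hT
  obtain ⟨⟨hxC, -⟩, hxx, hxt⟩ := hx
  have hxt' : ∀ t ∈ T, x + t ∈ insert x T := fun t ht => by
    rcases eq_or_ne t 0 with rfl | ht0
    exacts [by simp, mem_insert_of_mem x (hxt t ht ht0)]
  refine ⟨insert_subset hxC hTC, mem_insert_of_mem x hT0, ?_,
    hTfin.subset (sdiff_subset_sdiff_right (subset_insert x T))⟩
  rintro u (rfl | hu) v (rfl | hv)
  · exact mem_insert_of_mem _ hxx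
  · exact hxt' v hv
  · exact add_comm u v ▸ hxt' u hu
  · exact mem_insert_of_mem x (hTadd u hu v hv)

lemma SpecialGap.of_insert (hxC : x ∈ C) (hxT : x ∉ T) (hx0 : x ≠ 0)
    (hadd : ∀ u ∈ insert x T, ∀ v ∈ insert x T, u + v ∈ insert x T) : SpecialGap C T x := by
  have hmem : ∀ t ∈ insert x T, t ≠ 0 → x + t ∈ T := fun t ht ht0 =>
    (hadd x (mem_insert x T) t ht).resolve_left fun h => ht0 (add_eq_left.mp h)
  exact ⟨⟨hxC, hxT⟩, hmem x (mem_insert x T) hx0, fun t ht => hmem t (mem_insert_of_mem x ht)⟩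

lemma IsFrob.insert_of_ne (hf : IsFrob O C T f) (hxf : x ≠ f) : IsFrob O C (insert x T) f := by
  obtain ⟨⟨hfC, hfT⟩, hmax⟩ := hf
  refine ⟨⟨hfC, ?_⟩, fun z hz => hmax z (sdiff_subset_sdiff_right (subset_insert x T) hz)⟩
  rintro (h | h)
  exacts [hxf h.symm, hfT h]

lemma IsBSemigroup.insert_of_specialGap (hT : IsBSemigroup O C T f) (hx : SpecialGap C T x)
    (hxf : x ≠ f) : IsBSemigroup O C (insert x T) f :=
  ⟨hT.1.insert_of_specialGap hx, hT.2.1.insert_of_ne hxf, hT.2.2.trans (subset_insert x T)⟩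

end Insert

theorem statement5_general (p : ℕ) (C : Set (Fin p → ℕ))
    (O : AdmissibleOrder p) (f : Fin p → ℕ)
    (T : Set (Fin p → ℕ)) (hT : IsBSemigroup O C T f)
    (x : Fin p → ℕ) (hx : x ∈ BSet C f) (hxT : x ∉ T) :
    (IsBSemigroup O C (insert x T) f ∧
        ∃ a, IsAlpha O C (insert x T) f a ∧ (insert x T) \ {a} = T) ↔
      (SpecialGap C T x ∧ ∃ a, IsAlpha O C T f a ∧ O.lt x a) := by
  have hx0 : x ≠ 0 := fun h => hxT (h ▸ hT.1.2.1)
  constructor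
  · rintro ⟨hS, a, ha, hdiff⟩
    obtain rfl : x = a := by
      by_contra hxa
      exact hxT (hdiff ▸ ⟨mem_insert x T, hxa⟩)
    have hxf : x ≠ f := fun h => hS.2.1.1.2 (h ▸ mem_insert x T)
    obtain ⟨b, hb⟩ := exists_isAlpha O C T f
    exact ⟨.of_insert hx.1 hxT hx0 hS.1.2.2.1, b, hb, ha.lt_of_insert hxT hxf hb⟩
  · rintro ⟨hsg, a, ha, hxa⟩
    have hxf : x ≠ f := by
      rintro rfl
      exact hxa.2 (O.le_antisymm _ _ hxa.1 ha.le_frob)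
    exact ⟨hT.insert_of_specialGap hsg hxf, x, ha.insert_of_lt hx hx0 hxa,
      insert_sdiff_self_of_notMem hxT⟩

/-- For a B-semigroup T with respect to f and x ∈ B(f) \ T: T ∪ {x} is a B-semigroup with
respect to f satisfying (T ∪ {x}) \ {α(T ∪ {x})} = T iff x ∈ SG(T) and x ≺ α(T). -/
theorem statement5 (p : ℕ) (hp : 0 < p) (C : Set (Fin p → ℕ)) (hC : IsIntegerCone p C)
    (O : AdmissibleOrder p) (f : Fin p → ℕ) (hfC : f ∈ C) (hf0 : f ≠ 0)
    (T : Set (Fin p → ℕ)) (hT : IsBSemigroup O C T f)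
    (x : Fin p → ℕ) (hx : x ∈ BSet C f) (hxT : x ∉ T) :
    (IsBSemigroup O C (insert x T) f ∧
        ∃ a, IsAlpha O C (insert x T) f a ∧ (insert x T) \ {a} = T) ↔
      (SpecialGap C T x ∧ ∃ a, IsAlpha O C T f a ∧ O.lt x a) :=
  statement5_general p C O f T hT x hx hxT
end

section
/- Let C ⊆ ℕ^p be an integer cone, ⪯ an admissible total order on ℕ^p, f ∈ C \ {0}, and let T be a C-semigroup with Fb(T) = f. For a C-semigroup S with Fb(S) = f, S ∩ B(f) = T ∩ B(f) and S ≠ T, say S is a child of T if T = S ∪ {λ(S)}. Then S is a child of T if and only if S = T \ {x} for some minimal generator x of T with x ∈ C \ B(f) and λ(T) ≺ x ≺ f. -/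
/-!
A child `S` and its parent `T = S ∪ {λ(S)}` differ only in `λ(S)`. As `S` is closed under addition
and `λ(S) ∉ S`, `λ(S)` is not a sum of two nonzero elements of `T`, so it is a minimal generator of
`T`; every gap of `T` outside `B(f)` is a gap of `S` other than `λ(S)`, whence `λ(T) ≺ λ(S)`.
Conversely, removing from `T` an element `x ∉ B(f)` with `λ(T) ≺ x` makes `x` the largest gap
outside `B(f)`.
-/

open Set BigOperators

namespace AdmissibleOrder

variable {p : ℕ} (O : AdmissibleOrder p)

theorem exists_max_of_finite {F : Set (Fin p → ℕ)} (hF : F.Finite) (hne : F.Nonempty) :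
    ∃ m ∈ F, ∀ x ∈ F, O.le x m := by
  induction F, hF using Set.Finite.induction_on with
  | empty => exact absurd hne Set.not_nonempty_empty
  | @insert a s _ _ ih =>
    rcases s.eq_empty_or_nonempty with rfl | hs
    · refine ⟨a, mem_insert a ∅, ?_⟩
      rintro x (rfl | hx)
      exacts [O.le_refl x, absurd hx (notMem_empty x)]
    · obtain ⟨m, hm, hmax⟩ := ih hs
      rcases O.le_total a m with ham | hma
      · exact ⟨m, Or.inr hm, by rintro x (rfl | hx); exacts [ham, hmax x hx]⟩
      · refine ⟨a, Or.inl rfl, ?_⟩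
        rintro x (rfl | hx)
        exacts [O.le_refl x, O.le_trans x m a (hmax x hx) hma]

end AdmissibleOrder

section Lambda

variable {p : ℕ} {O : AdmissibleOrder p} {C S T : Set (Fin p → ℕ)} {f l x : Fin p → ℕ}

theorem mem_msg_insert (hS : ∀ a ∈ S, ∀ b ∈ S, a + b ∈ S) (hlS : l ∉ S) (hl0 : l ≠ 0) :
    l ∈ msg (insert l S) := by
  refine ⟨⟨mem_insert l S, hl0⟩, ?_⟩
  rintro ⟨a, ⟨rfl | haS, ha0⟩, b, ⟨rfl | hbS, hb0⟩, hab⟩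
  · exact hl0 (by simpa using hab)
  · exact hb0 (by simpa using hab)
  · exact ha0 (by simpa using hab)
  · exact hlS (hab ▸ hS a haS b hbS)

theorem self_mem_BSet (hf : f ∈ C) (h0 : (0 : Fin p → ℕ) ∈ C) : f ∈ BSet C f :=
  ⟨hf, 0, h0, add_zero f⟩

theorem exists_isLambda_of_finite (hT : (C \ T).Finite) : ∃ l, IsLambda O C T f l := by
  rcases {g | g ∈ C \ T ∧ g ∉ BSet C f}.eq_empty_or_nonempty with hG | hG
  · exact ⟨0, Or.inr ⟨fun g hg => by_contra fun hgB => hG.subset ⟨hg, hgB⟩, rfl⟩⟩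
  · obtain ⟨m, hm, hmax⟩ := O.exists_max_of_finite (hT.subset fun g hg => hg.1) hG
    exact ⟨m, Or.inl ⟨hm.1, hm.2, fun g hg hgB => hmax g ⟨hg, hgB⟩⟩⟩

theorem IsLambdaGap.lt_of_isFrob (hl : IsLambdaGap O C S f l) (hf : IsFrob O C S f)
    (h0 : (0 : Fin p → ℕ) ∈ C) : O.lt l f :=
  ⟨hf.2 l hl.1, fun hlf => (hlf ▸ hl.2.1) (self_mem_BSet hf.1.1 h0)⟩

theorem IsLambdaGap.exists_isLambda_insert_lt (hl : IsLambdaGap O C S f l)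
    (hS : (C \ S).Finite) (h0 : (0 : Fin p → ℕ) ∈ S) :
    ∃ m, IsLambda O C (insert l S) f m ∧ O.lt m l := by
  obtain ⟨m, hm⟩ := exists_isLambda_of_finite (O := O) (f := f)
    (hS.subset (sdiff_subset_sdiff_right (subset_insert l S)))
  refine ⟨m, hm, ?_⟩
  rcases hm with ⟨⟨hmC, hmT⟩, hmB, -⟩ | ⟨-, rfl⟩
  · exact ⟨hl.2.2 m ⟨hmC, fun h => hmT (Or.inr h)⟩ hmB, fun h => hmT (Or.inl h)⟩
  · exact ⟨O.zero_le l, fun h => hl.1.2 (h ▸ h0)⟩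

theorem IsLambda.isLambdaGap_diff_singleton (hl : IsLambda O C T f l) (hlx : O.le l x)
    (hxC : x ∈ C) (hxB : x ∉ BSet C f) : IsLambdaGap O C (T \ {x}) f x := by
  refine ⟨⟨hxC, fun h => h.2 rfl⟩, hxB, fun g ⟨hgC, hgS⟩ hgB => ?_⟩
  by_cases hgx : g = x
  · exact hgx ▸ O.le_refl x
  have hgT : g ∉ T := fun hgT => hgS ⟨hgT, hgx⟩
  rcases hl with ⟨-, -, hmax⟩ | ⟨hall, -⟩
  · exact O.le_trans g l x (hmax g ⟨hgC, hgT⟩ hgB) hlx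
  · exact absurd (hall g ⟨hgC, hgT⟩) hgB

end Lambda

theorem statement10_general (p : ℕ) (C : Set (Fin p → ℕ))
    (O : AdmissibleOrder p) (f : Fin p → ℕ)
    (T : Set (Fin p → ℕ))
    (S : Set (Fin p → ℕ)) (hS : IsCSemigroup C S) (hSf : IsFrob O C S f) :
    (∃ l, IsLambdaGap O C S f l ∧ T = insert l S) ↔
      (∃ x ∈ msg T, x ∈ C ∧ x ∉ BSet C f ∧
        (∃ l, IsLambda O C T f l ∧ O.lt l x) ∧ O.lt x f ∧ S = T \ {x}) := by
  obtain ⟨hSC, h0S, hSadd, hSfin⟩ := hS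
  constructor
  · rintro ⟨l, hl, rfl⟩
    have hl0 : l ≠ 0 := (ne_of_mem_of_not_mem h0S hl.1.2).symm
    exact ⟨l, mem_msg_insert hSadd hl.1.2 hl0, hl.1.1, hl.2.1,
      hl.exists_isLambda_insert_lt hSfin h0S, hl.lt_of_isFrob hSf (hSC h0S),
      (insert_sdiff_self_of_notMem hl.1.2).symm⟩
  · rintro ⟨x, hxT, hxC, hxB, ⟨l, hl, hlx⟩, -, rfl⟩
    exact ⟨x, hl.isLambdaGap_diff_singleton hlx.1 hxC hxB,
      (insert_sdiff_self_of_mem hxT.1.1).symm⟩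

/-- Children characterization: S is a child of T (i.e. T = S ∪ {λ(S)}) iff S = T \ {x} for
some minimal generator x of T with x ∈ C \ B(f) and λ(T) ≺ x ≺ f. -/
theorem statement10 (p : ℕ) (hp : 0 < p) (C : Set (Fin p → ℕ)) (hC : IsIntegerCone p C)
    (O : AdmissibleOrder p) (f : Fin p → ℕ) (hfC : f ∈ C) (hf0 : f ≠ 0)
    (T : Set (Fin p → ℕ)) (hT : IsCSemigroup C T) (hTf : IsFrob O C T f)
    (S : Set (Fin p → ℕ)) (hS : IsCSemigroup C S) (hSf : IsFrob O C S f)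
    (hBeq : S ∩ BSet C f = T ∩ BSet C f) (hne : S ≠ T) :
    (∃ l, IsLambdaGap O C S f l ∧ T = insert l S) ↔
      (∃ x ∈ msg T, x ∈ C ∧ x ∉ BSet C f ∧
        (∃ l, IsLambda O C T f l ∧ O.lt l x) ∧ O.lt x f ∧ S = T \ {x}) :=
  statement10_general p C O f T S hS hSf
end
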